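/- arXiv:math/0606187 — 2 statements merged into one kernel-verified Lean document; each statement's English description precedes it below -/
import Mathlib

section
/- Let n ≥ 4. For every curvature operator R ∈ S²_B(so(n)): R + R#I = (n−1)·R_I + ((n−2)/2)·R_{Ric₀} = Ric∧id. -/
/-!
Common setup: we identify ⋀²ℝⁿ with the Lie algebra `so n` of real skew-symmetric
`n × n` matrices, sending `eᵢ ∧ eⱼ` to the rotation by `π/2` in the plane spanned by
`eᵢ, eⱼ`; the inner product on `so n` is `⟪A, B⟫ = -(1/2)·tr (A * B)`, and under this
identification `v ∧ w` corresponds to the skew-symmetric matrix `v wᵀ - w vᵀ`, while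
the wedge `A ∧ B` of two endomorphisms of `ℝⁿ` acts on a skew matrix `M` by
`M ↦ (1/2)(A M Bᵀ + B M Aᵀ)` (the unique linear extension of
`v∧w ↦ (1/2)(Av ∧ Bw + Bv ∧ Aw)`).
-/

noncomputable section

namespace BW

open Matrix

abbrev Mat (n : ℕ) := Matrix (Fin n) (Fin n) ℝ

/-- `so n`: the space of real skew-symmetric `n × n` matrices (≅ ⋀²ℝⁿ). -/
def so (n : ℕ) : Submodule ℝ (Mat n) where
  carrier := {A | Aᵀ = -A}
  add_mem' := by
    intro A B hA hB
    simp only [Set.mem_setOf_eq] at *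
    rw [Matrix.transpose_add, hA, hB, neg_add]
  zero_mem' := by simp
  smul_mem' := by
    intro c A hA
    simp only [Set.mem_setOf_eq] at *
    rw [Matrix.transpose_smul, hA, smul_neg]

variable {n : ℕ}

lemma mem_so_iff {A : Mat n} : A ∈ so n ↔ Aᵀ = -A := Iff.rfl

/-- The inner product `⟨A,B⟩ = -(1/2)·tr(AB)` on `so n`. -/
def ip (A B : so n) : ℝ := -(1/2) * Matrix.trace ((A : Mat n) * (B : Mat n))

/-- `ip` as a linear map in the second variable. -/
def ipL (A : so n) : so n →ₗ[ℝ] ℝ where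
  toFun B := ip A B
  map_add' B C := by
    simp only [ip, Submodule.coe_add, Matrix.mul_add, Matrix.trace_add]; ring
  map_smul' c B := by
    simp only [ip, SetLike.val_smul, Matrix.mul_smul, Matrix.trace_smul, smul_eq_mul,
      RingHom.id_apply]; ring

/-- The Lie bracket (matrix commutator) on `so n`. -/
def brk (A B : so n) : so n :=
  ⟨(A : Mat n) * (B : Mat n) - (B : Mat n) * (A : Mat n), by
    have hA : (A : Mat n)ᵀ = -(A : Mat n) := A.2
    have hB : (B : Mat n)ᵀ = -(B : Mat n) := B.2
    rw [mem_so_iff, Matrix.transpose_sub, Matrix.transpose_mul, Matrix.transpose_mul, hA, hB]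
    noncomm_ring⟩

/-- Auxiliary linear map underlying `A ∧ B`. -/
def wedgeAux (A B : Mat n) : Mat n →ₗ[ℝ] Mat n where
  toFun M := (1/2 : ℝ) • (A * M * Bᵀ + B * M * Aᵀ)
  map_add' M N := by
    simp only [mul_add, add_mul, smul_add]
    module
  map_smul' c M := by
    simp only [mul_smul_comm, smul_mul_assoc, RingHom.id_apply]
    module

lemma wedgeAux_mem (A B : Mat n) : ∀ M ∈ so n, wedgeAux A B M ∈ so n := by
  intro M hM
  rw [mem_so_iff] at hM ⊢
  show ((1/2 : ℝ) • (A * M * Bᵀ + B * M * Aᵀ))ᵀ = -((1/2 : ℝ) • (A * M * Bᵀ + B * M * Aᵀ))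
  rw [Matrix.transpose_smul, Matrix.transpose_add, Matrix.transpose_mul, Matrix.transpose_mul,
    Matrix.transpose_mul, Matrix.transpose_mul, Matrix.transpose_transpose,
    Matrix.transpose_transpose, hM]
  simp only [Matrix.neg_mul, Matrix.mul_neg, Matrix.mul_assoc, smul_neg, neg_add, smul_add]
  abel

/-- The wedge `A ∧ B` of two endomorphisms of ℝⁿ, as an endomorphism of `so n ≅ ⋀²ℝⁿ`:
the unique linear map with `(A ∧ B)(v ∧ w) = (1/2)(Av ∧ Bw + Bv ∧ Aw)`. -/
def wedge (A B : Mat n) : Module.End ℝ (so n) :=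
  (wedgeAux A B).restrict (p := so n) (q := so n) (wedgeAux_mem A B)

/-- The index set of pairs `i < j`. -/
def pairs (n : ℕ) : Finset (Fin n × Fin n) := Finset.univ.filter fun p => p.1 < p.2

/-- The standard basis vector `eᵢ` of ℝⁿ. -/
def evec (i : Fin n) : Fin n → ℝ := fun k => if k = i then 1 else 0

/-- `v ∧ w`, as an element of `so n ≅ ⋀²ℝⁿ`. -/
def vwedge (v w : Fin n → ℝ) : so n :=
  ⟨Matrix.of fun i j => v i * w j - w i * v j, by
    rw [mem_so_iff]
    ext i j
    simp only [Matrix.transpose_apply, Matrix.of_apply, Matrix.neg_apply]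
    ring⟩

/-- The orthonormal basis vector `eᵢ ∧ eⱼ` of `so n ≅ ⋀²ℝⁿ`. -/
def bvec (i j : Fin n) : so n := vwedge (evec i) (evec j)

/-- Hamilton's sharp product `R # S`: the self-adjoint endomorphism of `so n` determined by
`⟨(R#S)h, h⟩ = (1/2)·Σ_{α,β} ⟨[R(b_α), S(b_β)], h⟩·⟨[b_α, b_β], h⟩`,
where `(b_α)` is the orthonormal basis `(eᵢ ∧ eⱼ)_{i<j}` of `so n`. -/
def sharp (R S : Module.End ℝ (so n)) : Module.End ℝ (so n) :=
  (1/4 : ℝ) • ∑ p ∈ pairs n, ∑ q ∈ pairs n,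
    ((ipL (brk (R (bvec p.1 p.2)) (S (bvec q.1 q.2)))).smulRight
        (brk (bvec p.1 p.2) (bvec q.1 q.2))
      + (ipL (brk (bvec p.1 p.2) (bvec q.1 q.2))).smulRight
        (brk (R (bvec p.1 p.2)) (S (bvec q.1 q.2))))

/-- The right-hand side `R² + R^#` of Hamilton's ODE. -/
def Qode (R : Module.End ℝ (so n)) : Module.End ℝ (so n) := R * R + sharp R R

/-- The coordinates `R_{ijkl} = ⟨R(eᵢ∧eⱼ), e_k∧e_l⟩` of an endomorphism of `so n`. -/
def Rcoord (R : Module.End ℝ (so n)) (i j k l : Fin n) : ℝ := ip (R (bvec i j)) (bvec k l)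

/-- Self-adjointness with respect to the inner product `ip`. -/
def selfAdjEnd (R : Module.End ℝ (so n)) : Prop := ∀ X Y : so n, ip (R X) Y = ip X (R Y)

/-- A curvature operator: a self-adjoint endomorphism of `so n ≅ ⋀²ℝⁿ` satisfying the
first Bianchi identity.  (`isCurvOp` carves out `S²_B(so n)`.) -/
def isCurvOp (R : Module.End ℝ (so n)) : Prop :=
  selfAdjEnd R ∧
    ∀ i j k l : Fin n, Rcoord R i j k l + Rcoord R j k i l + Rcoord R k i j l = 0

/-- The Ricci tensor `Ric_{ij} = Σ_k R_{ikjk}` of `R`. -/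
def RicM (R : Module.End ℝ (so n)) : Mat n := Matrix.of fun i j => ∑ k, Rcoord R i k j k

/-- `λ̄ = tr(Ric)/n`. -/
def lamb (R : Module.End ℝ (so n)) : ℝ := Matrix.trace (RicM R) / (n : ℝ)

/-- The traceless Ricci tensor `Ric₀ = Ric - (tr Ric / n)·id`. -/
def Ric0 (R : Module.End ℝ (so n)) : Mat n := RicM R - lamb R • (1 : Mat n)

/-- `σ = tr(Ric₀²)/n`. -/
def sigmaR (R : Module.End ℝ (so n)) : ℝ := Matrix.trace (Ric0 R * Ric0 R) / (n : ℝ)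

/-- `R_I = (λ̄/(n-1))·(id ∧ id)`, the projection of `R` onto `⟨I⟩`. -/
def RI (R : Module.End ℝ (so n)) : Module.End ℝ (so n) :=
  (lamb R / ((n : ℝ) - 1)) • wedge (1 : Mat n) (1 : Mat n)

/-- `R_{Ric₀} = (2/(n-2))·(Ric₀ ∧ id)`, the projection of `R` onto `⟨Ric₀⟩`. -/
def RRic0 (R : Module.End ℝ (so n)) : Module.End ℝ (so n) :=
  (2 / ((n : ℝ) - 2)) • wedge (Ric0 R) (1 : Mat n)

/-- The linear map `ℓ_{a,b}(R) = R + 2(n-1)a·R_I + (n-2)b·R_{Ric₀}`. -/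
def lab (a b : ℝ) (R : Module.End ℝ (so n)) : Module.End ℝ (so n) :=
  R + (2 * ((n : ℝ) - 1) * a) • RI R + (((n : ℝ) - 2) * b) • RRic0 R

/-- Positive semidefiniteness of the quadratic form of an endomorphism of `so n`. -/
def posSemidefEnd (R : Module.End ℝ (so n)) : Prop := ∀ X : so n, 0 ≤ ip (R X) X

/-- Positive definiteness of the quadratic form of an endomorphism of `so n`. -/
def posDefEnd (R : Module.End ℝ (so n)) : Prop := ∀ X : so n, X ≠ 0 → 0 < ip (R X) X

/-- `R` is 2-nonnegative: the sum of its two smallest eigenvalues is nonnegative;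
equivalently (Ky Fan), `q_R(X) + q_R(Y) ≥ 0` for all orthonormal pairs `X, Y`. -/
def twoNonneg (R : Module.End ℝ (so n)) : Prop :=
  ∀ X Y : so n, ip X X = 1 → ip Y Y = 1 → ip X Y = 0 → 0 ≤ ip (R X) X + ip (R Y) Y

/-- The (Frobenius) norm of an endomorphism of `so n`, computed in the orthonormal
basis `(eᵢ ∧ eⱼ)_{i<j}`. -/
def endNorm (R : Module.End ℝ (so n)) : ℝ :=
  Real.sqrt (∑ p ∈ pairs n, ip (R (bvec p.1 p.2)) (R (bvec p.1 p.2)))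

/-- The tangent cone `T_R C`: the closure of `{t·(S - R) : S ∈ C, t ≥ 0}`. -/
def tangCone (C : Set (Module.End ℝ (so n))) (R : Module.End ℝ (so n)) :
    Set (Module.End ℝ (so n)) :=
  {X | ∀ ε > 0, ∃ S ∈ C, ∃ t : ℝ, 0 ≤ t ∧ endNorm (X - t • (S - R)) < ε}

/-- `C` is a closed subset of the space of endomorphisms of `so n`. -/
def isClosedSet (C : Set (Module.End ℝ (so n))) : Prop :=
  ∀ X, (∀ ε > 0, ∃ Y ∈ C, endNorm (X - Y) < ε) → X ∈ C

/-- The interior of `C` relative to the subspace `S²_B(so n)` of curvature operators. -/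
def interiorCurv (C : Set (Module.End ℝ (so n))) : Set (Module.End ℝ (so n)) :=
  {X | isCurvOp X ∧ ∃ ε > 0, ∀ Y, isCurvOp Y → endNorm (Y - X) < ε → Y ∈ C}

/-- Auxiliary linear map `M ↦ g M gᵀ` on matrices. -/
def conjAux (g : Mat n) : Mat n →ₗ[ℝ] Mat n where
  toFun M := g * M * gᵀ
  map_add' M N := by simp only [mul_add, add_mul]
  map_smul' c M := by simp only [mul_smul_comm, smul_mul_assoc, RingHom.id_apply]

/-- `⋀²g` : the action `M ↦ g M gᵀ` of `g` on `so n ≅ ⋀²ℝⁿ` (for `g` orthogonal this is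
the second exterior power of `g`). -/
def conjSo (g : Mat n) : Module.End ℝ (so n) :=
  (conjAux g).restrict (p := so n) (q := so n) (fun M hM => by
    rw [mem_so_iff] at hM ⊢
    show (g * M * gᵀ)ᵀ = -(g * M * gᵀ)
    rw [Matrix.transpose_mul, Matrix.transpose_mul, Matrix.transpose_transpose, hM]
    simp only [Matrix.neg_mul, Matrix.mul_neg, Matrix.mul_assoc])

/-- The action `g · R = (⋀²g) ∘ R ∘ (⋀²g)⁻¹` of an orthogonal matrix `g`
(whose inverse is `gᵀ`) on endomorphisms of `so n`. -/
def onAct (g : Mat n) (R : Module.End ℝ (so n)) : Module.End ℝ (so n) :=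
  conjSo g * R * conjSo gᵀ

/-- Two sets are at Hausdorff distance at most `ε` from each other. -/
def hdClose (A B : Set (Module.End ℝ (so n))) (ε : ℝ) : Prop :=
  (∀ X ∈ A, ∃ Y ∈ B, endNorm (X - Y) ≤ ε) ∧ ∀ Y ∈ B, ∃ X ∈ A, endNorm (X - Y) ≤ ε

/-- The truncation `C ∩ {‖R‖ ≤ 1}`. -/
def truncSet (C : Set (Module.End ℝ (so n))) : Set (Module.End ℝ (so n)) :=
  {R ∈ C | endNorm R ≤ 1}


/-! ### Auxiliary lemmas -/

/-- Kronecker delta. -/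
def kd (a b : Fin n) : ℝ := if a = b then 1 else 0

lemma bvec_coe_apply (i j a b : Fin n) :
    ((bvec i j : Mat n)) a b = kd a i * kd b j - kd a j * kd b i := rfl

lemma skew_apply (A : so n) (a b : Fin n) : (A : Mat n) a b = -((A : Mat n) b a) := by
  have h := congrFun (congrFun A.2 b) a
  simp only [Matrix.transpose_apply, Matrix.neg_apply] at h
  linarith

lemma ip_bvec (A : so n) (k l : Fin n) : ip A (bvec k l) = (A : Mat n) k l := by
  have hs := skew_apply A k l
  simp only [ip, Matrix.trace, Matrix.diag, Matrix.mul_apply, bvec_coe_apply, kd]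
  simp only [mul_sub, mul_ite, mul_one, mul_zero, Finset.sum_ite_eq, Finset.sum_ite_eq',
    Finset.sum_ite_irrel, Finset.sum_const_zero, Finset.mem_univ, if_true,
    Finset.sum_sub_distrib]
  linarith

lemma bvec_symm (i j : Fin n) : bvec j i = -bvec i j := by
  apply Subtype.ext
  ext a b
  simp only [bvec_coe_apply, Submodule.coe_neg, Matrix.neg_apply]
  ring

lemma bvec_diag (i : Fin n) : bvec i i = 0 := by
  apply Subtype.ext
  ext a b
  simp only [bvec_coe_apply, ZeroMemClass.coe_zero, Matrix.zero_apply]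
  ring

lemma brk_coe (A B : so n) :
    ((brk A B : Mat n)) = (A : Mat n) * (B : Mat n) - (B : Mat n) * (A : Mat n) := rfl

lemma brk_bvec_entry (A : so n) (s t a b : Fin n) :
    ((brk A (bvec s t) : Mat n)) a b =
      (A : Mat n) a s * kd b t - (A : Mat n) a t * kd b s
        - kd a s * (A : Mat n) t b + kd a t * (A : Mat n) s b := by
  simp only [brk_coe, Matrix.sub_apply, Matrix.mul_apply, bvec_coe_apply, kd]
  simp only [mul_sub, sub_mul, mul_ite, ite_mul, mul_one, one_mul, mul_zero, zero_mul,
    Finset.sum_ite_eq, Finset.sum_ite_eq', Finset.sum_ite_irrel, Finset.sum_const_zero,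
    Finset.mem_univ, if_true, Finset.sum_sub_distrib]
  ring

/-- Any skew matrix is a combination of the `bvec`s. -/
lemma so_eq_sum (X : so n) :
    X = (1/2 : ℝ) • ∑ i, ∑ j, (X : Mat n) i j • bvec i j := by
  apply Subtype.ext
  have h1 : ((((1/2 : ℝ) • ∑ i, ∑ j, (X : Mat n) i j • bvec i j : so n)) : Mat n)
      = (1/2 : ℝ) • ∑ i, ∑ j, (X : Mat n) i j • (bvec i j : Mat n) := by
    push_cast
    simp
  rw [h1]
  ext a b
  have hs := skew_apply X a b
  simp only [Matrix.smul_apply, Matrix.sum_apply, bvec_coe_apply, kd, smul_eq_mul]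
  simp only [mul_sub, mul_ite, mul_one, mul_zero, Finset.sum_ite_eq, Finset.sum_ite_eq',
    Finset.sum_ite_irrel, Finset.sum_const_zero, Finset.mem_univ, if_true,
    Finset.sum_sub_distrib]
  linarith

lemma end_ext {T₁ T₂ : Module.End ℝ (so n)}
    (h : ∀ i j, T₁ (bvec i j) = T₂ (bvec i j)) : T₁ = T₂ := by
  ext X
  conv_lhs => rw [so_eq_sum X]
  conv_rhs => rw [so_eq_sum X]
  simp only [_root_.map_smul, map_sum, h]

lemma ipL_apply (A B : so n) : ipL A B = ip A B := rfl

lemma ip_comm (A B : so n) : ip A B = ip B A := by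
  unfold ip
  rw [Matrix.trace_mul_comm]

lemma wedge_one_one : wedge (1 : Mat n) (1 : Mat n) = LinearMap.id := by
  apply LinearMap.ext
  intro X
  apply Subtype.ext
  show (1/2 : ℝ) • ((1 : Mat n) * (X : Mat n) * (1 : Mat n)ᵀ + (1 : Mat n) * (X : Mat n) * (1 : Mat n)ᵀ) = (X : Mat n)
  rw [Matrix.transpose_one, Matrix.one_mul, Matrix.mul_one, smul_add]
  module

lemma wedge_add_left (A B C : Mat n) : wedge (A + B) C = wedge A C + wedge B C := by
  apply LinearMap.ext
  intro X
  apply Subtype.ext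
  show (1/2 : ℝ) • ((A + B) * (X : Mat n) * Cᵀ + C * (X : Mat n) * (A + B)ᵀ)
      = (1/2 : ℝ) • (A * (X : Mat n) * Cᵀ + C * (X : Mat n) * Aᵀ)
        + (1/2 : ℝ) • (B * (X : Mat n) * Cᵀ + C * (X : Mat n) * Bᵀ)
  rw [Matrix.transpose_add, Matrix.add_mul, Matrix.add_mul, Matrix.mul_add]
  rw [← smul_add]
  congr 1
  abel

lemma wedge_smul_left (c : ℝ) (A B : Mat n) : wedge (c • A) B = c • wedge A B := by
  apply LinearMap.ext
  intro X
  apply Subtype.ext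
  show (1/2 : ℝ) • ((c • A) * (X : Mat n) * Bᵀ + B * (X : Mat n) * (c • A)ᵀ)
      = c • ((1/2 : ℝ) • (A * (X : Mat n) * Bᵀ + B * (X : Mat n) * Aᵀ))
  rw [Matrix.transpose_smul, Matrix.smul_mul, Matrix.smul_mul, Matrix.mul_smul]
  rw [← smul_add, smul_comm]

/-- Sum over `pairs n` versus the full double sum. -/
lemma sum_pairs_eq (f : Fin n × Fin n → ℝ) (hsym : ∀ a b, f (a, b) = f (b, a))
    (hdiag : ∀ a, f (a, a) = 0) :
    ∑ p ∈ pairs n, f p = (1/2) * ∑ a, ∑ b, f (a, b) := by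
  have hfull : ∑ a, ∑ b, f (a, b) = ∑ p : Fin n × Fin n, f p := by
    rw [← Finset.sum_product']
    rw [Finset.univ_product_univ]
  have hsplit := Finset.sum_filter_add_sum_filter_not Finset.univ (fun p : Fin n × Fin n => p.1 < p.2) f
  have hgt : ∑ p ∈ Finset.univ.filter (fun p : Fin n × Fin n => ¬ p.1 < p.2), f p
      = ∑ p ∈ pairs n, f p := by
    rw [show Finset.univ.filter (fun p : Fin n × Fin n => ¬ p.1 < p.2)
        = (Finset.univ.filter (fun p : Fin n × Fin n => p.2 < p.1))
          ∪ (Finset.univ.filter (fun p : Fin n × Fin n => p.1 = p.2)) from ?_]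
    · rw [Finset.sum_union ?_]
      · have h1 : ∑ p ∈ Finset.univ.filter (fun p : Fin n × Fin n => p.2 < p.1), f p
            = ∑ p ∈ pairs n, f p := by
          apply Finset.sum_equiv (Equiv.prodComm (Fin n) (Fin n))
          · intro p
            simp [pairs]
          · intro p _
            exact (hsym p.2 p.1).symm
        have h2 : ∑ p ∈ Finset.univ.filter (fun p : Fin n × Fin n => p.1 = p.2), f p = 0 := by
          apply Finset.sum_eq_zero
          intro p hp
          simp only [Finset.mem_filter] at hp
          have : p = (p.1, p.1) := by
            rw [Prod.ext_iff]; exact ⟨rfl, hp.2.symm⟩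
          rw [this, hdiag]
        rw [h1, h2, add_zero]
      · rw [Finset.disjoint_filter]
        intro p _ hlt heq
        exact absurd heq (ne_of_gt hlt)
    · ext p
      simp only [Finset.mem_filter, Finset.mem_union, Finset.mem_univ, true_and, not_lt]
      constructor
      · intro h
        rcases lt_or_eq_of_le h with h' | h'
        · exact Or.inl h'
        · exact Or.inr h'.symm
      · intro h
        rcases h with h | h
        · exact h.le
        · exact le_of_eq h.symm
  have : ∑ p ∈ pairs n, f p + ∑ p ∈ pairs n, f p = ∑ a, ∑ b, f (a, b) := by
    rw [hfull]
    rw [← hsplit, hgt]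
    rfl
  linarith

lemma sharp_id_entry (R : Module.End ℝ (so n)) (i j k l : Fin n) :
    ((sharp R (wedge (1 : Mat n) (1 : Mat n)) (bvec i j) : so n) : Mat n) k l
      = (1/4) * ∑ p ∈ pairs n, ∑ q ∈ pairs n,
          (((brk (R (bvec p.1 p.2)) (bvec q.1 q.2) : so n) : Mat n) i j *
             ((brk (bvec p.1 p.2) (bvec q.1 q.2) : so n) : Mat n) k l
           + ((brk (bvec p.1 p.2) (bvec q.1 q.2) : so n) : Mat n) i j *
             ((brk (R (bvec p.1 p.2)) (bvec q.1 q.2) : so n) : Mat n) k l) := by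
  rw [sharp, wedge_one_one]
  simp only [LinearMap.smul_apply, LinearMap.sum_apply, LinearMap.add_apply,
    LinearMap.smulRight_apply, LinearMap.id_coe, id_eq, ipL_apply, ip_bvec]
  push_cast
  simp only [Matrix.smul_apply, Matrix.sum_apply, Matrix.add_apply, smul_eq_mul]

lemma RicM_apply (R : Module.End ℝ (so n)) (a b : Fin n) :
    RicM R a b = ∑ x, ((R (bvec a x) : so n) : Mat n) b x := by
  simp only [RicM, Matrix.of_apply, Rcoord, ip_bvec]

lemma brk_zero_left (B : so n) : brk 0 B = 0 := by
  apply Subtype.ext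
  show ((0 : so n) : Mat n) * (B : Mat n) - (B : Mat n) * ((0 : so n) : Mat n) = ((0 : so n) : Mat n)
  simp

lemma brk_zero_right (A : so n) : brk A 0 = 0 := by
  apply Subtype.ext
  show (A : Mat n) * ((0 : so n) : Mat n) - ((0 : so n) : Mat n) * (A : Mat n) = ((0 : so n) : Mat n)
  simp

lemma brk_neg_left (A B : so n) : brk (-A) B = -(brk A B) := by
  apply Subtype.ext
  show ((-A : so n) : Mat n) * (B : Mat n) - (B : Mat n) * ((-A : so n) : Mat n)
      = -((A : Mat n) * (B : Mat n) - (B : Mat n) * (A : Mat n))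
  push_cast
  noncomm_ring

lemma brk_neg_right (A B : so n) : brk A (-B) = -(brk A B) := by
  apply Subtype.ext
  show (A : Mat n) * ((-B : so n) : Mat n) - ((-B : so n) : Mat n) * (A : Mat n)
      = -((A : Mat n) * (B : Mat n) - (B : Mat n) * (A : Mat n))
  push_cast
  noncomm_ring

/-- Double sums over `pairs n` versus the full quadruple sum. -/
lemma sum_pairs_pairs (F : Fin n × Fin n → Fin n × Fin n → ℝ)
    (hsym1 : ∀ a b q, F (a, b) q = F (b, a) q)
    (hdiag1 : ∀ a q, F (a, a) q = 0)
    (hsym2 : ∀ p a b, F p (a, b) = F p (b, a))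
    (hdiag2 : ∀ p a, F p (a, a) = 0) :
    ∑ p ∈ pairs n, ∑ q ∈ pairs n, F p q
      = (1/4) * ∑ a, ∑ b, ∑ c, ∑ d, F (a, b) (c, d) := by
  rw [sum_pairs_eq (fun p => ∑ q ∈ pairs n, F p q)
    (fun a b => Finset.sum_congr rfl fun q _ => hsym1 a b q)
    (fun a => Finset.sum_eq_zero fun q _ => hdiag1 a q)]
  have hin : ∀ a b : Fin n, ∑ q ∈ pairs n, F (a, b) q = (1/2) * ∑ c, ∑ d, F (a, b) (c, d) :=
    fun a b => sum_pairs_eq (fun q => F (a, b) q) (hsym2 (a, b)) (hdiag2 (a, b))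
  simp only [hin]
  rw [Finset.mul_sum, Finset.mul_sum]
  refine Finset.sum_congr rfl fun a _ => ?_
  rw [Finset.mul_sum, Finset.mul_sum]
  refine Finset.sum_congr rfl fun b _ => ?_
  ring

lemma wedge_ric_entry (A : Mat n) (i j k l : Fin n) :
    ((wedge A (1 : Mat n) (bvec i j) : so n) : Mat n) k l
      = (1/2) * (A k i * kd l j - A k j * kd l i + kd k i * A l j - kd k j * A l i) := by
  show ((1/2 : ℝ) • (A * (bvec i j : Mat n) * (1 : Mat n)ᵀ
      + (1 : Mat n) * (bvec i j : Mat n) * Aᵀ)) k l = _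
  rw [Matrix.transpose_one, Matrix.mul_one, Matrix.one_mul]
  simp only [Matrix.smul_apply, Matrix.add_apply, Matrix.mul_apply, Matrix.transpose_apply,
    bvec_coe_apply, kd, smul_eq_mul]
  simp only [mul_sub, sub_mul, mul_ite, ite_mul, mul_one, one_mul, mul_zero, zero_mul,
    Finset.sum_ite_eq, Finset.sum_ite_eq', Finset.sum_ite_irrel, Finset.sum_const_zero,
    Finset.mem_univ, if_true, Finset.sum_sub_distrib]
  split_ifs <;> ring

/-- The core scalar identity behind `R + R#I = Ric ∧ id`. -/
lemma key_identity {n : ℕ} (r : Fin n → Fin n → Fin n → Fin n → ℝ)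
    (h1 : ∀ a b c d, r b a c d = - r a b c d)
    (h2 : ∀ a b c d, r a b d c = - r a b c d)
    (hp : ∀ a b c d, r c d a b = r a b c d)
    (hB : ∀ a b c d, r a b c d + r b c a d + r c a b d = 0)
    (i j k l : Fin n) :
    r i j k l + (1/16) * (∑ p, ∑ q, ∑ s, ∑ t,
      ((r p q i s * kd j t - r p q i t * kd j s - kd i s * r p q t j + kd i t * r p q s j) *
        ((kd k p * kd s q - kd k q * kd s p) * kd l t - (kd k p * kd t q - kd k q * kd t p) * kd l s
          - kd k s * (kd t p * kd l q - kd t q * kd l p) + kd k t * (kd s p * kd l q - kd s q * kd l p))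
      + ((kd i p * kd s q - kd i q * kd s p) * kd j t - (kd i p * kd t q - kd i q * kd t p) * kd j s
          - kd i s * (kd t p * kd j q - kd t q * kd j p) + kd i t * (kd s p * kd j q - kd s q * kd j p)) *
        (r p q k s * kd l t - r p q k t * kd l s - kd k s * r p q t l + kd k t * r p q s l)))
    = (1/2) * ((∑ x, r k x i x) * kd l j - (∑ x, r k x j x) * kd l i
        + kd k i * (∑ x, r l x j x) - kd k j * (∑ x, r l x i x)) := by
  have E1 : ∀ a b : Fin n, ∑ x, r x a b x = -∑ x, r a x b x := fun a b => by
    rw [← Finset.sum_neg_distrib]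
    exact Finset.sum_congr rfl fun x _ => h1 a x b x
  have E2 : ∀ a b : Fin n, ∑ x, r a x x b = -∑ x, r a x b x := fun a b => by
    rw [← Finset.sum_neg_distrib]
    exact Finset.sum_congr rfl fun x _ => h2 a x b x
  have E3 : ∀ a b : Fin n, ∑ x, r x a x b = ∑ x, r a x b x := fun a b =>
    Finset.sum_congr rfl fun x _ => by rw [h1 a x x b, h2 a x b x, neg_neg]
  simp only [kd]
  simp only [mul_sub, sub_mul, mul_add, add_mul, mul_ite, ite_mul, mul_one, one_mul,
    mul_zero, zero_mul, Finset.sum_add_distrib, Finset.sum_sub_distrib, Finset.sum_ite_irrel,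
    Finset.sum_const_zero, Finset.sum_ite_eq, Finset.sum_ite_eq', Finset.mem_univ, if_true]
  simp only [E1, E2, E3]
  have kd_comm : ∀ a b : Fin n, kd a b = kd b a := fun a b => by
    unfold kd
    simp [eq_comm]
  have E4 : ∀ a b : Fin n, ∑ x, r a x b x = ∑ x, r b x a x := fun a b =>
    Finset.sum_congr rfl fun x _ => hp b x a x
  have KD : ∀ (a b : Fin n) (x : ℝ), (if a = b then x else 0) = x * kd a b := by
    intro a b x
    unfold kd
    split_ifs <;> ring
  simp only [KD]
  have M2 : ∀ a b c d : Fin n, (∑ x, r a x b x) * kd c d = (∑ x, r b x a x) * kd c d :=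
    fun a b c d => by rw [E4 a b]
  have M3 : ∀ a b c d : Fin n, (∑ x, r a x b x) * kd c d = (∑ x, r a x b x) * kd d c :=
    fun a b c d => by rw [kd_comm c d]
  linarith [hB i j k l, h1 i k j l, h1 i k l j, h1 i l k j, h1 j l i k,
    hp i l k j, hp j k i l, hp i k j l,
    h2 i k j l, h2 i l j k, h2 j l i k, h2 l j i k,
    M2 i k j l, M3 k i j l, M2 j k i l, M3 k j i l,
    M2 i l j k, M3 l i j k, M2 j l i k, M3 l j i k]

/-- Lemma: `R + R#I = (n−1)·R_I + ((n−2)/2)·R_{Ric₀} = Ric ∧ id`. -/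
theorem stmt_1 {n : ℕ} (hn : 4 ≤ n) (R : Module.End ℝ (so n)) (hR : isCurvOp R) :
    R + sharp R (wedge (1 : Mat n) (1 : Mat n))
        = ((n : ℝ) - 1) • RI R + (((n : ℝ) - 2) / 2) • RRic0 R ∧
      ((n : ℝ) - 1) • RI R + (((n : ℝ) - 2) / 2) • RRic0 R = wedge (RicM R) (1 : Mat n) := by
  obtain ⟨hSA, hBian⟩ := hR
  have hn4 : (4 : ℝ) ≤ (n : ℝ) := by exact_mod_cast hn
  have hn1 : ((n : ℝ) - 1) ≠ 0 := by linarith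
  have hn2 : ((n : ℝ) - 2) ≠ 0 := by linarith
  have hsecond : ((n : ℝ) - 1) • RI R + (((n : ℝ) - 2) / 2) • RRic0 R
      = wedge (RicM R) (1 : Mat n) := by
    rw [RI, RRic0, smul_smul, smul_smul]
    have c1 : ((n : ℝ) - 1) * (lamb R / ((n : ℝ) - 1)) = lamb R := by field_simp
    have c2 : ((n : ℝ) - 2) / 2 * (2 / ((n : ℝ) - 2)) = 1 := by field_simp
    rw [c1, c2, one_smul, ← wedge_smul_left, ← wedge_add_left]
    congr 1
    rw [Ric0]
    module
  refine ⟨?_, hsecond⟩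
  rw [hsecond]
  -- the coordinate functions of R
  have h1' : ∀ a b c d : Fin n, ((R (bvec b a) : so n) : Mat n) c d
      = - ((R (bvec a b) : so n) : Mat n) c d := by
    intro a b c d
    rw [bvec_symm a b, map_neg]
    simp
  have h2' : ∀ a b c d : Fin n, ((R (bvec a b) : so n) : Mat n) d c
      = - ((R (bvec a b) : so n) : Mat n) c d := by
    intro a b c d
    exact skew_apply (R (bvec a b)) d c
  have hp' : ∀ a b c d : Fin n, ((R (bvec c d) : so n) : Mat n) a b
      = ((R (bvec a b) : so n) : Mat n) c d := by
    intro a b c d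
    rw [← ip_bvec, ← ip_bvec, hSA, ip_comm]
  have hB' : ∀ a b c d : Fin n, ((R (bvec a b) : so n) : Mat n) c d
      + ((R (bvec b c) : so n) : Mat n) a d + ((R (bvec c a) : so n) : Mat n) b d = 0 := by
    intro a b c d
    have h := hBian a b c d
    simpa only [Rcoord, ip_bvec] using h
  apply end_ext
  intro i j
  apply Subtype.ext
  ext k l
  rw [LinearMap.add_apply]
  push_cast
  rw [Matrix.add_apply, sharp_id_entry, wedge_ric_entry]
  have hpp := sum_pairs_pairs
    (fun p q =>
      ((brk (R (bvec p.1 p.2)) (bvec q.1 q.2) : so n) : Mat n) i j *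
        ((brk (bvec p.1 p.2) (bvec q.1 q.2) : so n) : Mat n) k l
      + ((brk (bvec p.1 p.2) (bvec q.1 q.2) : so n) : Mat n) i j *
        ((brk (R (bvec p.1 p.2)) (bvec q.1 q.2) : so n) : Mat n) k l)
    ?_ ?_ ?_ ?_
  · rw [hpp]
    have hkey := key_identity (fun p q c d => ((R (bvec p q) : so n) : Mat n) c d)
      h1' h2' hp' hB' i j k l
    simp only [brk_bvec_entry, bvec_coe_apply, RicM_apply]
    linarith [hkey]
  · intro a b q
    simp only [bvec_symm a b, map_neg, brk_neg_left]
    push_cast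
    simp only [Matrix.neg_apply]
    ring
  · intro a q
    simp only [bvec_diag, map_zero, brk_zero_left]
    push_cast
    simp only [Matrix.zero_apply]
    ring
  · intro p a b
    simp only [bvec_symm a b, brk_neg_right]
    push_cast
    simp only [Matrix.neg_apply]
    ring
  · intro p a
    simp only [bvec_diag, brk_zero_right]
    push_cast
    simp only [Matrix.zero_apply]
    ring

end BW
end
end

section
/- Let n ≥ 2 and equip the real vector space S²(so(n)) of self-adjoint endomorphisms of so(n) with the inner product ⟨R,S⟩ := tr(R∘S). Then the function P : S²(so(n)) → ℝ, P(R) := (1/3)·tr(R³ + R∘R^#), is differentiable, and its gradient at every R is ∇P(R) = R² + R^#; equivalently, the derivative of P at R in the direction S equals tr((R² + R^#)∘S) for every self-adjoint S. -/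
/-!
Common setup: we identify ⋀²ℝⁿ with the Lie algebra `so n` of real skew-symmetric
`n × n` matrices, sending `eᵢ ∧ eⱼ` to the rotation by `π/2` in the plane spanned by
`eᵢ, eⱼ`; the inner product on `so n` is `⟪A, B⟫ = -(1/2)·tr (A * B)`, and under this
identification `v ∧ w` corresponds to the skew-symmetric matrix `v wᵀ - w vᵀ`, while
the wedge `A ∧ B` of two endomorphisms of `ℝⁿ` acts on a skew matrix `M` by
`M ↦ (1/2)(A M Bᵀ + B M Aᵀ)` (the unique linear extension of
`v∧w ↦ (1/2)(Av ∧ Bw + Bv ∧ Aw)`).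
-/

noncomputable section

namespace BW

open Matrix

variable {n : ℕ}

/-- Huisken's function `P(R) = (1/3)·tr(R³ + R·R^#)`. -/
def Pfun (R : Module.End ℝ (so n)) : ℝ :=
  (1 / 3) * LinearMap.trace ℝ ↥(so n) (R * R * R + R * sharp R R)

lemma ip_add_left (A B C : so n) : ip (A + B) C = ip A C + ip B C := by
  simp only [ip, Submodule.coe_add, Matrix.add_mul, Matrix.trace_add]; ring

lemma ip_smul_left (c : ℝ) (A B : so n) : ip (c • A) B = c * ip A B := by
  simp only [ip, SetLike.val_smul, Matrix.smul_mul, Matrix.trace_smul, smul_eq_mul]; ring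

lemma ip_neg_left (A B : so n) : ip (-A) B = -ip A B := by
  rw [← neg_one_smul ℝ A, ip_smul_left, neg_one_mul]

lemma brk_add_left (A B C : so n) : brk (A + B) C = brk A C + brk B C :=
  Subtype.ext (by simp only [brk, Submodule.coe_add]; noncomm_ring)

lemma brk_smul_left (c : ℝ) (A B : so n) : brk (c • A) B = c • brk A B :=
  Subtype.ext (by simp only [brk, SetLike.val_smul, Matrix.smul_mul, Matrix.mul_smul, smul_sub])

lemma brk_anticomm (A B : so n) : brk A B = -brk B A :=
  Subtype.ext (by simp only [brk, NegMemClass.coe_neg]; abel)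

lemma ip_brk (A B C : so n) : ip (brk A B) C = ip A (brk B C) := by
  simp only [ip, brk, Matrix.sub_mul, Matrix.mul_sub, Matrix.trace_sub, Matrix.mul_assoc]
  rw [Matrix.trace_mul_comm (B : Mat n), Matrix.mul_assoc]

def ad (A : so n) : Module.End ℝ (so n) where
  toFun := brk A
  map_add' B C := Subtype.ext (by simp only [brk, Submodule.coe_add]; noncomm_ring)
  map_smul' c B := Subtype.ext (by
    simp only [brk, SetLike.val_smul, Matrix.smul_mul, Matrix.mul_smul, smul_sub, RingHom.id_apply])

lemma ad_apply (A B : so n) : ad A B = brk A B := rfl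

lemma ip_ad_left (A X Y : so n) : ip (ad A X) Y = -ip X (ad A Y) := by
  rw [ad_apply, brk_anticomm, ip_neg_left, ip_brk, ad_apply]

lemma so_apply_swap (X : so n) (a b : Fin n) : (X : Mat n) b a = -(X : Mat n) a b := by
  simpa using congrFun (congrFun (mem_so_iff.mp X.2) a) b

lemma ip_bvec_right (X : so n) (i j : Fin n) : ip X (bvec i j) = (X : Mat n) i j := by
  simp only [ip, bvec, vwedge, evec, Matrix.trace, Matrix.diag_apply, Matrix.mul_apply,
    Matrix.of_apply, mul_sub, mul_ite, mul_one, mul_zero, Finset.sum_sub_distrib,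
    Finset.sum_ite_eq', Finset.mem_univ, if_true, Finset.sum_ite_irrel, Finset.sum_const_zero]
  rw [so_apply_swap X j i]
  ring

lemma bvec_apply (i j a b : Fin n) :
    (bvec i j : Mat n) a b
      = (if (a, b) = (i, j) then 1 else 0) - if (b, a) = (i, j) then 1 else 0 := by
  simp only [bvec, vwedge, evec, Matrix.of_apply, Prod.mk.injEq, ite_and, mul_ite, mul_one,
    mul_zero]
  split_ifs <;> simp_all

lemma sum_ip_bvec_smul_bvec (X : so n) :
    ∑ p ∈ pairs n, ip X (bvec p.1 p.2) • bvec p.1 p.2 = X := by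
  apply Subtype.ext
  ext a b
  simp only [AddSubmonoidClass.coe_finset_sum, Matrix.sum_apply, Submodule.coe_smul,
    Matrix.smul_apply, ip_bvec_right, bvec_apply, smul_eq_mul, mul_sub, mul_ite, mul_one,
    mul_zero, Finset.sum_sub_distrib, Finset.sum_ite_eq, pairs, Finset.mem_filter,
    Finset.mem_univ, true_and]
  rcases lt_trichotomy a b with hab | rfl | hab
  · simp [hab, hab.not_gt]
  · simp [show (X : Mat n) a a = 0 by linarith [so_apply_swap X a a]]
  · simp [hab, hab.not_gt, so_apply_swap X a b]

lemma trace_eq_sum_ip (T : Module.End ℝ (so n)) :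
    LinearMap.trace ℝ (so n) T = ∑ p ∈ pairs n, ip (T (bvec p.1 p.2)) (bvec p.1 p.2) := by
  have hT : T = ∑ p ∈ pairs n, (ipL (bvec p.1 p.2)).smulRight (T (bvec p.1 p.2)) := by
    ext1 X
    conv_lhs => rw [← sum_ip_bvec_smul_bvec X]
    simp only [map_sum, map_smul, LinearMap.sum_apply, LinearMap.smulRight_apply, ipL_apply,
      ip_comm X]
  conv_lhs => rw [hT]
  simp only [map_sum, LinearMap.trace_smulRight, ipL_apply, ip_comm (bvec _ _)]

lemma trace_eq_of_ip_eq (X Y : Module.End ℝ (so n)) (h : ∀ u v, ip (X u) v = ip u (Y v)) :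
    LinearMap.trace ℝ (so n) X = LinearMap.trace ℝ (so n) Y := by
  simp only [trace_eq_sum_ip, h, ip_comm (bvec _ _)]

lemma sharp_apply (R S : Module.End ℝ (so n)) (X : so n) :
    sharp R S X = (1/4 : ℝ) • ∑ p ∈ pairs n, ∑ q ∈ pairs n,
      (ip (brk (R (bvec p.1 p.2)) (S (bvec q.1 q.2))) X • brk (bvec p.1 p.2) (bvec q.1 q.2) +
        ip (brk (bvec p.1 p.2) (bvec q.1 q.2)) X • brk (R (bvec p.1 p.2)) (S (bvec q.1 q.2))) := by
  simp only [sharp, LinearMap.smul_apply, LinearMap.sum_apply, LinearMap.add_apply,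
    LinearMap.smulRight_apply, ipL_apply]

lemma sharp_comm (R S : Module.End ℝ (so n)) : sharp R S = sharp S R := by
  ext1 X
  rw [sharp_apply, sharp_apply, Finset.sum_comm]
  congr 1
  refine Finset.sum_congr rfl fun p _ => Finset.sum_congr rfl fun q _ => ?_
  rw [brk_anticomm (R (bvec q.1 q.2)), brk_anticomm (bvec q.1 q.2), ip_neg_left, ip_neg_left,
    neg_smul_neg, neg_smul_neg]

lemma sharp_add_left (R R' S : Module.End ℝ (so n)) :
    sharp (R + R') S = sharp R S + sharp R' S := by
  ext1 X
  simp only [LinearMap.add_apply, sharp_apply, brk_add_left, ip_add_left, add_smul, smul_add,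
    Finset.sum_add_distrib]
  abel

lemma sharp_smul_left (c : ℝ) (R S : Module.End ℝ (so n)) : sharp (c • R) S = c • sharp R S := by
  ext1 X
  simp only [LinearMap.smul_apply, sharp_apply, brk_smul_left, ip_smul_left, Finset.smul_sum,
    smul_add, smul_comm c, mul_smul]

lemma trace_mul_sharp {T : Module.End ℝ (so n)} (hT : selfAdjEnd T) (R S : Module.End ℝ (so n)) :
    LinearMap.trace ℝ (so n) (T * sharp R S) = (1/2) * ∑ p ∈ pairs n, ∑ q ∈ pairs n,
      ip (brk (R (bvec p.1 p.2)) (S (bvec q.1 q.2))) (T (brk (bvec p.1 p.2) (bvec q.1 q.2))) := by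
  have hcomp (ℓ : so n →ₗ[ℝ] ℝ) (v : so n) : T * ℓ.smulRight v = ℓ.smulRight (T v) :=
    LinearMap.ext fun X => map_smul T _ v
  have hswap (u v : so n) : ip v (T u) = ip u (T v) := by rw [← hT, ip_comm]
  simp only [sharp, mul_smul_comm, Finset.mul_sum, mul_add, hcomp, map_smul, map_sum, map_add,
    LinearMap.trace_smulRight, ipL_apply, smul_eq_mul, hswap (brk (R _) (S _))]
  ring_nf

lemma sum_ip_brk_eq_neg_trace {S T : Module.End ℝ (so n)} (hS : selfAdjEnd S) (A B : so n) :
    ∑ q ∈ pairs n, ip (brk A (S (bvec q.1 q.2))) (T (brk B (bvec q.1 q.2)))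
      = -LinearMap.trace ℝ (so n) (S * ad A * T * ad B) := by
  rw [trace_eq_sum_ip, ← Finset.sum_neg_distrib]
  refine Finset.sum_congr rfl fun q _ => ?_
  rw [← ad_apply, ip_ad_left, hS, ip_comm, ← ad_apply B]
  rfl

lemma trace_mul_ad_mul_ad_comm {S T : Module.End ℝ (so n)} (hS : selfAdjEnd S)
    (hT : selfAdjEnd T) (A B : so n) :
    LinearMap.trace ℝ (so n) (S * ad A * T * ad B)
      = LinearMap.trace ℝ (so n) (T * ad A * S * ad B) := by
  calc LinearMap.trace ℝ (so n) (S * ad A * T * ad B)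
      = LinearMap.trace ℝ (so n) (ad B * (T * ad A * S)) := by
        refine trace_eq_of_ip_eq _ _ fun u v => ?_
        simp only [Module.End.mul_apply]
        rw [hS, ip_ad_left, hT, ip_ad_left, neg_neg]
    _ = LinearMap.trace ℝ (so n) (T * ad A * S * ad B) := LinearMap.trace_mul_comm _ _ _

lemma trace_mul_sharp_comm {S T : Module.End ℝ (so n)} (hS : selfAdjEnd S) (hT : selfAdjEnd T)
    (R : Module.End ℝ (so n)) :
    LinearMap.trace ℝ (so n) (T * sharp R S) = LinearMap.trace ℝ (so n) (S * sharp R T) := by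
  simp only [trace_mul_sharp hT, trace_mul_sharp hS, sum_ip_brk_eq_neg_trace hS,
    sum_ip_brk_eq_neg_trace hT, trace_mul_ad_mul_ad_comm hS hT]

lemma hasDerivAt_cubic_zero (a b c d : ℝ) :
    HasDerivAt (fun t : ℝ => a + t * b + t ^ 2 * c + t ^ 3 * d) b 0 := by
  refine ((((hasDerivAt_const (0 : ℝ) a).add ((hasDerivAt_id' 0).mul_const b)).add
    ((hasDerivAt_pow 2 0).mul_const c)).add ((hasDerivAt_pow 3 0).mul_const d)).congr_deriv ?_
  simp

lemma sharp_add_smul_self (R S : Module.End ℝ (so n)) (t : ℝ) :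
    sharp (R + t • S) (R + t • S) = sharp R R + (2 * t) • sharp R S + t ^ 2 • sharp S S := by
  have hright (A B C : Module.End ℝ (so n)) : sharp A (B + C) = sharp A B + sharp A C := by
    rw [sharp_comm, sharp_add_left, sharp_comm B, sharp_comm C]
  have hsmul (A B : Module.End ℝ (so n)) : sharp A (t • B) = t • sharp A B := by
    rw [sharp_comm, sharp_smul_left, sharp_comm]
  rw [sharp_add_left, hright, hright, sharp_smul_left, sharp_smul_left, hsmul, hsmul,
    sharp_comm S R]
  module

lemma Pfun_add_smul (R S : Module.End ℝ (so n)) (t : ℝ) :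
    Pfun (R + t • S) = Pfun R
      + t * ((1/3) * LinearMap.trace ℝ (so n)
          (R * R * S + R * S * R + S * R * R + (2 : ℝ) • (R * sharp R S) + S * sharp R R))
      + t ^ 2 * ((1/3) * LinearMap.trace ℝ (so n)
          (R * S * S + S * R * S + S * S * R + (2 : ℝ) • (S * sharp R S) + R * sharp S S))
      + t ^ 3 * Pfun S := by
  simp only [Pfun, sharp_add_smul_self, mul_add, add_mul, smul_mul_assoc, mul_smul_comm,
    smul_add, map_add, map_smul, smul_eq_mul]
  ring

lemma hasDerivAt_Pfun_add_smul (R S : Module.End ℝ (so n)) :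
    HasDerivAt (fun t : ℝ => Pfun (R + t • S))
      ((1/3) * LinearMap.trace ℝ (so n)
        (R * R * S + R * S * R + S * R * R + (2 : ℝ) • (R * sharp R S) + S * sharp R R)) 0 := by
  simp only [Pfun_add_smul]
  exact hasDerivAt_cubic_zero _ _ _ _

lemma first_variation_Pfun_eq_trace {R S : Module.End ℝ (so n)} (hR : selfAdjEnd R)
    (hS : selfAdjEnd S) :
    (1/3) * LinearMap.trace ℝ (so n)
        (R * R * S + R * S * R + S * R * R + (2 : ℝ) • (R * sharp R S) + S * sharp R R)
      = LinearMap.trace ℝ (so n) ((R * R + sharp R R) * S) := by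
  have hRSR : LinearMap.trace ℝ (so n) (R * S * R) = LinearMap.trace ℝ (so n) (R * R * S) := by
    rw [LinearMap.trace_mul_comm, ← mul_assoc]
  have hSRR : LinearMap.trace ℝ (so n) (S * R * R) = LinearMap.trace ℝ (so n) (R * R * S) := by
    rw [mul_assoc, LinearMap.trace_mul_comm]
  have hsharp : LinearMap.trace ℝ (so n) (R * sharp R S)
      = LinearMap.trace ℝ (so n) (sharp R R * S) := by
    rw [trace_mul_sharp_comm hS hR, LinearMap.trace_mul_comm]
  rw [add_mul, map_add, map_add, map_add, map_add, map_add, map_smul, hRSR, hSRR, hsharp,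
    LinearMap.trace_mul_comm _ S, smul_eq_mul]
  ring

theorem stmt_10_general {n : ℕ} (R S : Module.End ℝ (so n))
    (hR : selfAdjEnd R) (hS : selfAdjEnd S) :
    HasDerivAt (fun t : ℝ => Pfun (R + t • S))
      (LinearMap.trace ℝ ↥(so n) ((R * R + sharp R R) * S)) 0 :=
  first_variation_Pfun_eq_trace hR hS ▸ hasDerivAt_Pfun_add_smul R S

/-- The ODE `R' = R² + R^#` is the gradient flow of `P` on the space of self-adjoint
endomorphisms of `so n` with inner product `⟨R,S⟩ = tr(R∘S)`: the derivative of `P` at `R`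
in the direction of a self-adjoint `S` equals `tr((R² + R^#)∘S) = ⟨R² + R^#, S⟩`. -/
theorem stmt_10 {n : ℕ} (hn : 2 ≤ n) (R S : Module.End ℝ (so n))
    (hR : selfAdjEnd R) (hS : selfAdjEnd S) :
    HasDerivAt (fun t : ℝ => Pfun (R + t • S))
      (LinearMap.trace ℝ ↥(so n) ((R * R + sharp R R) * S)) 0 :=
  stmt_10_general R S hR hS

end BW
end
end
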